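/- arXiv:1907.10996 — 4 statements merged into one kernel-verified Lean document; each statement's English description precedes it below -/
import Mathlib

section
/- The function f(x) = 1/√(2(x+1)) − 2/√(2(x+2)) is strictly increasing on the interval (0.8, ∞). -/
open Real in
lemma aux_hasDerivAt (x : ℝ) (hx : (0.8 : ℝ) < x) :
    HasDerivAt (fun x : ℝ => 1 / Real.sqrt (2 * (x + 1)) - 2 / Real.sqrt (2 * (x + 2)))
      (-(2 / (2 * Real.sqrt (2 * (x + 1)))) / (Real.sqrt (2 * (x + 1)))^2
        - 2 * (-(2 / (2 * Real.sqrt (2 * (x + 2)))) / (Real.sqrt (2 * (x + 2)))^2)) x := by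
  have h1 : (2 : ℝ) * (x + 1) ≠ 0 := by nlinarith
  have h2 : (2 : ℝ) * (x + 2) ≠ 0 := by nlinarith
  have u1 : HasDerivAt (fun x : ℝ => 2 * (x + 1)) 2 x := by
    simpa using ((hasDerivAt_id x).add_const 1).const_mul 2
  have u2 : HasDerivAt (fun x : ℝ => 2 * (x + 2)) 2 x := by
    simpa using ((hasDerivAt_id x).add_const 2).const_mul 2
  have s1 : HasDerivAt (fun x : ℝ => Real.sqrt (2 * (x + 1)))
      (2 / (2 * Real.sqrt (2 * (x + 1)))) x :=
    (Real.hasDerivAt_sqrt h1).comp x u1 |>.congr_deriv (by ring)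
  have s2 : HasDerivAt (fun x : ℝ => Real.sqrt (2 * (x + 2)))
      (2 / (2 * Real.sqrt (2 * (x + 2)))) x :=
    (Real.hasDerivAt_sqrt h2).comp x u2 |>.congr_deriv (by ring)
  have n1 : Real.sqrt (2 * (x + 1)) ≠ 0 := by
    positivity
  have n2 : Real.sqrt (2 * (x + 2)) ≠ 0 := by
    positivity
  have i1 := s1.inv n1
  have i2 := (s2.inv n2).const_mul 2
  have := i1.sub i2
  have hfun : (fun x : ℝ => 1 / Real.sqrt (2 * (x + 1)) - 2 / Real.sqrt (2 * (x + 2)))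
      = (fun x : ℝ => (Real.sqrt (2 * (x + 1)))⁻¹ - 2 * (Real.sqrt (2 * (x + 2)))⁻¹) := by
    funext y; rw [one_div]; ring
  rw [hfun]
  exact this

theorem stmt_0 :
    StrictMonoOn (fun x : ℝ => 1 / Real.sqrt (2 * (x + 1)) - 2 / Real.sqrt (2 * (x + 2)))
      (Set.Ioi (0.8 : ℝ)) := by
  apply StrictMonoOn.mono (s := Set.Ioi (0.8 : ℝ)) ?_ le_rfl
  apply strictMonoOn_of_deriv_pos (convex_Ioi _)
  · intro x hx
    exact (aux_hasDerivAt x hx).continuousAt.continuousWithinAt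
  · intro x hx
    rw [interior_Ioi] at hx
    rw [(aux_hasDerivAt x hx).deriv]
    have hx8 : (0.8 : ℝ) < x := hx
    have hu1 : (0:ℝ) < 2 * (x + 1) := by nlinarith
    have hu2 : (0:ℝ) < 2 * (x + 2) := by nlinarith
    have hs1 : (0:ℝ) < Real.sqrt (2 * (x + 1)) := Real.sqrt_pos.mpr hu1
    have hs2 : (0:ℝ) < Real.sqrt (2 * (x + 2)) := Real.sqrt_pos.mpr hu2
    have hsq1 : Real.sqrt (2 * (x + 1)) ^ 2 = 2 * (x + 1) := Real.sq_sqrt hu1.le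
    have hsq2 : Real.sqrt (2 * (x + 2)) ^ 2 = 2 * (x + 2) := Real.sq_sqrt hu2.le
    set a := Real.sqrt (2 * (x + 1)) with ha
    set b := Real.sqrt (2 * (x + 2)) with hb
    have key : b ^ 3 < 2 * a ^ 3 := by
      nlinarith [sq_nonneg (2*a - b), sq_nonneg (a - b), sq_nonneg a, sq_nonneg b,
        mul_pos hs1 hs2, sq_nonneg (a*b), sq_nonneg (2*a^3 - b^3)]
    have expand : -(2 / (2 * a)) / a ^ 2 - 2 * (-(2 / (2 * b)) / b ^ 2)
        = (2 * a^3 - b^3) / (a^3 * b^3) := by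
      field_simp
      ring
    rw [expand]
    exact div_pos (by linarith) (by positivity)
end

section
/- For every real number q ≥ 4, the expression 1/6 − (2/3)·(√3/√q) + 1/√(3q−3) − (q−2)/q + (q−2)/√((q−1)q) is nonnegative, with equality if and only if q = 4. -/
/-!
Put `a = √q`, `b = √(q - 1)`, `c = √3`. Over the common denominator `6 a² b c` the numerator is
`X - Y` with `X = 6a(a + c(a² - 2))` and `Y = b(12a + c(5a² - 12))`, both positive, and using
`b² = a² - 1`, `c² = 3` one gets `X² - Y² = (a² - 4)(33a⁴ + 27a² - 108 - 24ca(2a² - 3))`, whose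
second factor is positive for `a ≥ 2`. Hence the expression is `(q - 4)` times a positive number.
-/

lemma nonneg_and_eq_zero_iff_of_eq_sub_mul {E q r P : ℝ} (hrq : r ≤ q) (hP : 0 < P)
    (hE : E = (q - r) * P) : 0 ≤ E ∧ (E = 0 ↔ q = r) := by
  subst hE
  exact ⟨mul_nonneg (sub_nonneg.2 hrq) hP.le, by simp [hP.ne', sub_eq_zero]⟩

section

variable {a b c : ℝ}

lemma quartic_pos (ha : 2 ≤ a) (hc2 : c ^ 2 = 3) :
    0 < 33 * a ^ 4 + 27 * a ^ 2 - 108 - 24 * c * a * (2 * a ^ 2 - 3) := by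
  -- with `√3 ≤ 7/4` in place of `c`, the remaining quartic in `a` is still positive on `[2, ∞)`
  have hc : c ≤ 7 / 4 := by nlinarith [sq_nonneg (c - 7 / 4)]
  nlinarith [mul_nonneg (mul_nonneg (sub_nonneg.2 ha) (sub_nonneg.2 ha)) (sub_nonneg.2 ha),
    mul_nonneg (sub_nonneg.2 hc)
      (mul_nonneg (by linarith : (0:ℝ) ≤ a) (by nlinarith : (0:ℝ) ≤ 2 * a ^ 2 - 3))]

lemma exists_pos_gap_eq_mul (ha : 2 ≤ a) (hb : 0 < b) (hc : 0 < c)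
    (hb2 : b ^ 2 = a ^ 2 - 1) (hc2 : c ^ 2 = 3) :
    ∃ P, 0 < P ∧
      1 / 6 - 2 / 3 * (c / a) + 1 / (c * b) - (a ^ 2 - 2) / a ^ 2 + (a ^ 2 - 2) / (b * a) =
        (a ^ 2 - 4) * P := by
  set X := 6 * a * (a + c * (a ^ 2 - 2))
  set Y := b * (12 * a + c * (5 * a ^ 2 - 12))
  set B := 33 * a ^ 4 + 27 * a ^ 2 - 108 - 24 * c * a * (2 * a ^ 2 - 3)
  have ha0 : 0 < a := by linarith
  have hX : 0 < X := by nlinarith [mul_pos hc (show (0:ℝ) < a ^ 2 - 2 by nlinarith)]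
  have hY : 0 < Y := by
    have : 0 < 12 * a + c * (5 * a ^ 2 - 12) := by
      nlinarith [mul_pos hc (show (0:ℝ) < 5 * a ^ 2 - 12 by nlinarith)]
    positivity
  have hgap : 1 / 6 - 2 / 3 * (c / a) + 1 / (c * b) - (a ^ 2 - 2) / a ^ 2 + (a ^ 2 - 2) / (b * a)
      = (X - Y) / (6 * a ^ 2 * b * c) := by
    field_simp
    linear_combination (-12 * a * b) * hc2
  have hdiff : (X - Y) * (X + Y) = (a ^ 2 - 4) * B := by
    linear_combination (-(144 * a ^ 2 + 24 * a * c * (5 * a ^ 2 - 12) + c ^ 2 * (5 * a ^ 2 - 12) ^ 2)) * hb2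
      + (36 * a ^ 2 * (a ^ 2 - 2) ^ 2 - (a ^ 2 - 1) * (5 * a ^ 2 - 12) ^ 2) * hc2
  refine ⟨B / (6 * a ^ 2 * b * c * (X + Y)), by have := quartic_pos ha hc2; positivity, ?_⟩
  rw [hgap, ← mul_div_assoc, ← hdiff]
  exact (mul_div_mul_right _ _ (add_pos hX hY).ne').symm

end

lemma exists_pos_gap_eq_sub_four_mul {q : ℝ} (hq : 4 ≤ q) :
    ∃ P, 0 < P ∧
      1 / 6 - (2 / 3) * (Real.sqrt 3 / Real.sqrt q) + 1 / Real.sqrt (3 * q - 3)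
        - (q - 2) / q + (q - 2) / Real.sqrt ((q - 1) * q) = (q - 4) * P := by
  obtain ⟨a, ha, rfl⟩ : ∃ a, 2 ≤ a ∧ q = a ^ 2 :=
    ⟨Real.sqrt q, Real.le_sqrt_of_sq_le (by linarith), (Real.sq_sqrt (by linarith)).symm⟩
  have ha1 : 0 ≤ a ^ 2 - 1 := by nlinarith
  rw [show 3 * a ^ 2 - 3 = 3 * (a ^ 2 - 1) by ring, Real.sqrt_mul (by norm_num),
    Real.sqrt_mul ha1, Real.sqrt_sq (by linarith)]
  exact exists_pos_gap_eq_mul ha (Real.sqrt_pos.2 (by linarith)) (by positivity)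
    (Real.sq_sqrt ha1) (Real.sq_sqrt (by norm_num))

theorem stmt_6 (q : ℝ) (hq : 4 ≤ q) :
    0 ≤ 1 / 6 - (2 / 3) * (Real.sqrt 3 / Real.sqrt q) + 1 / Real.sqrt (3 * q - 3)
        - (q - 2) / q + (q - 2) / Real.sqrt ((q - 1) * q) ∧
    (1 / 6 - (2 / 3) * (Real.sqrt 3 / Real.sqrt q) + 1 / Real.sqrt (3 * q - 3)
        - (q - 2) / q + (q - 2) / Real.sqrt ((q - 1) * q) = 0 ↔ q = 4) := by
  obtain ⟨P, hP, hgap⟩ := exists_pos_gap_eq_sub_four_mul hq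
  exact nonneg_and_eq_zero_iff_of_eq_sub_mul hq hP hgap
end

section
/- For every real r with 1 ≤ r ≤ 2, we have (2/3 + 1/√8 + 1/√(2r)) − (2/√6 + 1/√12 + 1/√(3r)) > 0.0068. -/
/-!
The `r`-dependent part of the difference is `1/√(2r) - 1/√(3r) = (1/√2 - 1/√3)/√r`, which
decreases in `r`, so the minimum over `1 ≤ r ≤ 2` is attained at `r = 2`. There the difference
is `7/6 + 1/√8 - 3/√6 - 1/√12 ≈ 0.00680005`, and ten-digit bounds on `√6`, `√8`, `√12`
certify that it exceeds `0.0068`.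
-/

open Real

/-- `R(G') - R(G)` for Transformation V, as a function of the degree `r` of `x₆`. -/
noncomputable def randicGap (r : ℝ) : ℝ :=
  (2 / 3 + 1 / √8 + 1 / √(2 * r)) - (2 / √6 + 1 / √12 + 1 / √(3 * r))

lemma one_div_sqrt_mul_sub_one_div_sqrt_mul (a b : ℝ) {r : ℝ} (hr : 0 ≤ r) :
    1 / √(a * r) - 1 / √(b * r) = (1 / √a - 1 / √b) / √r := by
  rw [sqrt_mul' a hr, sqrt_mul' b hr]
  ring

lemma randicGap_eq {r : ℝ} (hr : 0 ≤ r) :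
    randicGap r = 2 / 3 + 1 / √8 - 2 / √6 - 1 / √12 + (1 / √2 - 1 / √3) / √r := by
  rw [randicGap, ← one_div_sqrt_mul_sub_one_div_sqrt_mul 2 3 hr]
  ring

lemma randicGap_antitoneOn : AntitoneOn randicGap (Set.Ioi 0) := by
  intro r (hr : 0 < r) s _ hrs
  have hcoeff : 0 ≤ 1 / √2 - 1 / √3 := by
    rw [sub_nonneg]
    gcongr
    norm_num
  rw [randicGap_eq hr.le, randicGap_eq (hr.le.trans hrs)]
  gcongr

lemma randicGap_two : 0.0068 < randicGap 2 := by
  have h4 : √(2 * 2) = 2 := sqrt_mul_self zero_le_two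
  have h6 : √(3 * 2) = √6 := by norm_num
  have h8 : √8 < 2.8284271248 := (sqrt_lt' (by norm_num)).2 (by norm_num)
  have h6' : 2.4494897427 < √6 := (lt_sqrt (by norm_num)).2 (by norm_num)
  have h12 : 3.4641016151 < √12 := (lt_sqrt (by norm_num)).2 (by norm_num)
  have i8 : 1 / 2.8284271248 < 1 / √8 := one_div_lt_one_div_of_lt (by positivity) h8
  have i6 : 2 / √6 < 2 / 2.4494897427 := div_lt_div_of_pos_left two_pos (by norm_num) h6'
  have i12 : 1 / √12 < 1 / 3.4641016151 := one_div_lt_one_div_of_lt (by norm_num) h12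
  rw [randicGap, h4, h6]
  linarith [one_div_lt_one_div_of_lt (by norm_num) h6']

theorem stmt_7 (r : ℝ) (hr1 : 1 ≤ r) (hr2 : r ≤ 2) :
    (2 / 3 + 1 / Real.sqrt 8 + 1 / Real.sqrt (2 * r)) -
      (2 / Real.sqrt 6 + 1 / Real.sqrt 12 + 1 / Real.sqrt (3 * r)) > 0.0068 :=
  randicGap_two.trans_le <|
    randicGap_antitoneOn (zero_lt_one.trans_le hr1 : (0 : ℝ) < r) (by norm_num : (0 : ℝ) < 2) hr2
end

section
/- Let G be a connected simple graph with n vertices, m edges and cyclomatic number γ = m − n + 1. Suppose G has no vertex of degree 1 and 0 < nᵢ < n for some i with 3 ≤ i ≤ n − 1, where nᵢ is the number of vertices of degree i. Then the number m_{i,i} of edges joining two vertices of degree i satisfies m_{i,i} ≤ nᵢ − 2 + γ. -/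
open Finset

/-- Number of vertices of degree `i` in `G`. -/
def nDeg {V : Type*} [Fintype V] (G : SimpleGraph V) [DecidableRel G.Adj] (i : ℕ) : ℕ :=
  (Finset.univ.filter (fun v => G.degree v = i)).card

open scoped Classical in
/-- Number of edges of `G` joining a vertex of degree `i` with a vertex of degree `j`. -/
noncomputable def mEdges {V : Type*} [Fintype V] [DecidableEq V] (G : SimpleGraph V)
    [DecidableRel G.Adj] (i j : ℕ) : ℕ :=
  (G.edgeFinset.filter
    (fun e => ∃ u v, e = s(u, v) ∧ G.degree u = i ∧ G.degree v = j)).card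

/-- The Randić index of a graph. -/
noncomputable def randic {V : Type*} [Fintype V] [DecidableEq V] (G : SimpleGraph V)
    [DecidableRel G.Adj] : ℝ :=
  ∑ e ∈ G.edgeFinset,
    Sym2.lift ⟨fun u v => 1 / Real.sqrt ((G.degree u : ℝ) * (G.degree v : ℝ)),
      fun u v => by simp [mul_comm]⟩ e

/-!
Let `B` be the set of vertices whose degree is not `i`. Every vertex of `B` has degree at least
`2`, so double counting vertex-edge incidences gives `2 |B| ≤ ∑_{e meets B} |e ∩ B|`. Each term
is at most `2`, and connectivity provides an edge with exactly one end in `B`, so the edges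
meeting `B` outnumber the vertices of `B`. The edges not meeting `B` are those counted by
`m_{i,i}`, whence `m_{i,i} ≤ m - |B| - 1 = nᵢ - 2 + γ`.
-/

namespace SimpleGraph

variable {V : Type*}

lemma Preconnected.exists_adj_notMem_mem {G : SimpleGraph V} (hG : G.Preconnected) {s : Set V}
    {a b : V} (ha : a ∉ s) (hb : b ∈ s) : ∃ u v, G.Adj u v ∧ u ∉ s ∧ v ∈ s := by
  obtain ⟨d, -, hd₁, hd₂⟩ := (hG a b).some.exists_boundary_dart sᶜ ha (by simpa using hb)
  exact ⟨d.fst, d.snd, d.adj, hd₁, by simpa using hd₂⟩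

variable [Fintype V] [DecidableEq V] {G : SimpleGraph V} [DecidableRel G.Adj]

lemma sum_degree_eq_sum_card_filter_mem (s : Finset V) :
    ∑ v ∈ s, G.degree v = ∑ e ∈ G.edgeFinset, #{v ∈ s | v ∈ e} := by
  simp_rw [← card_incidenceFinset_eq_degree, incidenceFinset_eq_filter]
  exact sum_card_bipartiteAbove_eq_sum_card_bipartiteBelow (fun v e => v ∈ e)

lemma card_lt_card_edges_meeting (s : Finset V) (hdeg : ∀ v ∈ s, 2 ≤ G.degree v) {u v : V}
    (huv : G.Adj u v) (hu : u ∉ s) (hv : v ∈ s) :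
    #s < #{e ∈ G.edgeFinset | ∃ x ∈ s, x ∈ e} := by
  have hle_two (e : Sym2 V) : #{x ∈ s | x ∈ e} ≤ 2 :=
    calc #{x ∈ s | x ∈ e} ≤ #e.toFinset := card_le_card fun x hx => by simp_all
      _ ≤ 2 := by rw [Sym2.card_toFinset]; split_ifs <;> simp
  have hcross : #{x ∈ s | x ∈ s(u, v)} < 2 := by
    rw [show {x ∈ s | x ∈ s(u, v)} = {v} by ext x; aesop]
    simp
  have huv_mem : s(u, v) ∈ {e ∈ G.edgeFinset | ∃ x ∈ s, x ∈ e} := by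
    simpa [huv] using ⟨v, hv, Or.inr rfl⟩
  suffices 2 * #s < 2 * #{e ∈ G.edgeFinset | ∃ x ∈ s, x ∈ e} by omega
  calc 2 * #s = ∑ _x ∈ s, 2 := by simp [mul_comm]
    _ ≤ ∑ x ∈ s, G.degree x := sum_le_sum hdeg
    _ = ∑ e ∈ {e ∈ G.edgeFinset | ∃ x ∈ s, x ∈ e}, #{x ∈ s | x ∈ e} := by
      rw [sum_degree_eq_sum_card_filter_mem, sum_filter_of_ne]
      intro e _ he
      obtain ⟨x, hx⟩ := card_ne_zero.mp he
      exact ⟨x, (mem_filter.mp hx).1, (mem_filter.mp hx).2⟩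
    _ < ∑ _e ∈ {e ∈ G.edgeFinset | ∃ x ∈ s, x ∈ e}, 2 :=
      sum_lt_sum (fun e _ => hle_two e) ⟨_, huv_mem, hcross⟩
    _ = 2 * #{e ∈ G.edgeFinset | ∃ x ∈ s, x ∈ e} := by simp [mul_comm]

end SimpleGraph

lemma degree_ne_of_nDeg_eq_zero {V : Type*} [Fintype V] {G : SimpleGraph V} [DecidableRel G.Adj]
    {k : ℕ} (h : nDeg G k = 0) (v : V) : G.degree v ≠ k := by
  have hall : ∀ x, G.degree x ≠ k := by simpa [nDeg, filter_eq_empty_iff] using h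
  exact hall v

lemma mEdges_self_eq {V : Type*} [Fintype V] [DecidableEq V] (G : SimpleGraph V)
    [DecidableRel G.Adj] (i : ℕ) :
    mEdges G i i = #{e ∈ G.edgeFinset | ∀ v ∈ e, G.degree v = i} := by
  rw [mEdges]
  congr 1
  ext e
  induction e with
  | h u v =>
    simp only [mem_filter, Sym2.mem_iff, forall_eq_or_imp, forall_eq, Sym2.eq_iff]
    refine and_congr_right fun _ => ⟨?_, fun ⟨hu, hv⟩ => ⟨u, v, .inl ⟨rfl, rfl⟩, hu, hv⟩⟩
    rintro ⟨x, y, ⟨rfl, rfl⟩ | ⟨rfl, rfl⟩, hx, hy⟩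
    exacts [⟨hx, hy⟩, ⟨hy, hx⟩]

theorem stmt_12_general {V : Type*} [Fintype V] [DecidableEq V] (G : SimpleGraph V) [DecidableRel G.Adj]
    (n m γ : ℕ) (hconn : G.Connected) (hn : Fintype.card V = n)
    (hm : G.edgeFinset.card = m) (hγ : (γ : ℤ) = (m : ℤ) - n + 1)
    (h1 : nDeg G 1 = 0) (i : ℕ)
    (hpos : 0 < nDeg G i) (hlt : nDeg G i < n) :
    (mEdges G i i : ℤ) ≤ (nDeg G i : ℤ) - 2 + γ := by
  set B : Finset V := {v | G.degree v ≠ i}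
  have hvertices : nDeg G i + #B = n := by
    rw [← hn]
    exact card_filter_add_card_filter_not _
  have hedges : mEdges G i i + #{e ∈ G.edgeFinset | ∃ x ∈ B, x ∈ e} = m := by
    rw [mEdges_self_eq, ← hm,
      ← card_filter_add_card_filter_not (s := G.edgeFinset) (fun e => ∃ x ∈ B, x ∈ e), add_comm]
    congr 2
    ext e
    simp [B, not_imp_not]
  obtain ⟨a, ha⟩ := card_pos.mp hpos
  obtain ⟨b, hb⟩ := card_pos.mp (by omega : 0 < #B)
  have : Nontrivial V := nontrivial_of_ne a b (by rintro rfl; simp_all [B])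
  have hdeg : ∀ v ∈ B, 2 ≤ G.degree v := fun v hv => by
    have hv₀ := hconn.preconnected.degree_pos_of_nontrivial v
    have hv₁ := degree_ne_of_nDeg_eq_zero h1 v
    have hvi : G.degree v ≠ i := by simpa [B] using hv
    omega
  obtain ⟨u, v, huv, hu, hv⟩ :=
    hconn.preconnected.exists_adj_notMem_mem (s := ↑B) (by simpa [B] using ha) hb
  have hmeeting := SimpleGraph.card_lt_card_edges_meeting B hdeg huv hu hv
  omega

theorem stmt_12 {V : Type*} [Fintype V] [DecidableEq V] (G : SimpleGraph V) [DecidableRel G.Adj]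
    (n m γ : ℕ) (hconn : G.Connected) (hn : Fintype.card V = n)
    (hm : G.edgeFinset.card = m) (hγ : (γ : ℤ) = (m : ℤ) - n + 1)
    (h1 : nDeg G 1 = 0) (i : ℕ) (hi3 : 3 ≤ i) (hin : i ≤ n - 1)
    (hpos : 0 < nDeg G i) (hlt : nDeg G i < n) :
    (mEdges G i i : ℤ) ≤ (nDeg G i : ℤ) - 2 + γ :=
  stmt_12_general G n m γ hconn hn hm hγ h1 i hpos hlt
end
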